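/- arXiv:1010.2933 — 4 statements merged into one kernel-verified Lean document; each statement's English description precedes it below -/
import Mathlib

section
/- Let k ∈ ℂ and set k₁ = (1-k)/(1+k) (with k ≠ -1). If (x, w) ∈ ℂ² satisfies w² = (1-x²)(1-k²x²) and w ≠ 0, then the pair (λ, μ) = (i(1+k)·x/w, (k²x⁴ - 1)/w²) satisfies μ² = (1-λ²)(1-k₁²λ²). -/
/-! With `s = (x / w)²` one has `λ² = -(1 + k)² s` and `k₁² λ² = -(1 - k)² s`, so the right-hand
side is `(1 + (1 + k)² s) (1 + (1 - k)² s)`. On the curve `w² = (1 - x²)(1 - k² x²)` the numerator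
of `μ` satisfies `(k² x⁴ - 1)² = w⁴ + 2 (1 + k²) x² w² + (1 - k²)² x⁴`, which after division by
`w⁴` is the same quadratic in `s`. -/

theorem sq_mul_pow_four_sub_one_of_curve {R : Type*} [CommRing R] {k x w : R}
    (hcurve : w ^ 2 = (1 - x ^ 2) * (1 - k ^ 2 * x ^ 2)) :
    (k ^ 2 * x ^ 4 - 1) ^ 2 = w ^ 4 + 2 * (1 + k ^ 2) * x ^ 2 * w ^ 2 + (1 - k ^ 2) ^ 2 * x ^ 4 := by
  linear_combination (-(w ^ 2 + (2 + 2 * k ^ 2) * x ^ 2 + (1 - x ^ 2) * (1 - k ^ 2 * x ^ 2))) * hcurve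

theorem sq_div_sq_eq_of_curve {F : Type*} [Field F] {k x w : F} (hw : w ≠ 0)
    (hcurve : w ^ 2 = (1 - x ^ 2) * (1 - k ^ 2 * x ^ 2)) :
    ((k ^ 2 * x ^ 4 - 1) / w ^ 2) ^ 2 =
      (1 + (1 + k) ^ 2 * (x / w) ^ 2) * (1 + (1 - k) ^ 2 * (x / w) ^ 2) := by
  field_simp
  linear_combination sq_mul_pow_four_sub_one_of_curve hcurve

theorem one_sub_landen_modulus_sq_mul {F : Type*} [Field F] {k : F} (hk : 1 + k ≠ 0) (s : F) :
    1 - ((1 - k) / (1 + k)) ^ 2 * (-(1 + k) ^ 2 * s) = 1 + (1 - k) ^ 2 * s := by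
  field_simp
  ring

open Complex in
/-- The map φ(x,w) = (i(1+k)x/w, (k²x⁴-1)/w²) sends the curve
    w² = (1-x²)(1-k²x²) to the curve μ² = (1-λ²)(1-k₁²λ²) with k₁ = (1-k)/(1+k). -/
theorem map_between_curves (k x w : ℂ) (hk : k ≠ -1) (hw : w ≠ 0)
    (hcurve : w ^ 2 = (1 - x ^ 2) * (1 - k ^ 2 * x ^ 2)) :
    ((k ^ 2 * x ^ 4 - 1) / w ^ 2) ^ 2 =
      (1 - (I * (1 + k) * x / w) ^ 2) *
        (1 - ((1 - k) / (1 + k)) ^ 2 * (I * (1 + k) * x / w) ^ 2) := by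
  have hk1 : 1 + k ≠ 0 := fun h => hk (by linear_combination h)
  have hlam : (I * (1 + k) * x / w) ^ 2 = -(1 + k) ^ 2 * (x / w) ^ 2 := by
    rw [mul_div_assoc, mul_pow, mul_pow, I_sq]
    ring
  rw [hlam, one_sub_landen_modulus_sq_mul hk1, sq_div_sq_eq_of_curve hw hcurve]
  ring
end

section
/- Let k ∈ ℂ, k ≠ -1, and φ(x,w) = (λ(x,w), μ(x,w)) = (i(1+k)x/w, (k²x⁴-1)/w²) on the curve w² = (1-x²)(1-k²x²). Then the pullback of the differential dλ/μ equals -i(1+k)·dx/w; explicitly, for a differentiable path t ↦ (x(t), w(t)) on the curve with w(t) ≠ 0 and μ(x(t),w(t)) ≠ 0, one has (d/dt λ(x(t),w(t)))/μ(x(t),w(t)) = -i(1+k)·x'(t)/w(t). -/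
/-!
Differentiating the curve equation along the path gives
`w w' = -x x' (1 + k² - 2k²x²)`; substituting this and `w² = (1-x²)(1-k²x²)` into the quotient
rule for `x / w` collapses the numerator `x' w² - x w w'` to `x' (1 - k²x⁴)`.
-/

open Filter Topology

section CurveDerivative

variable {𝕜 : Type*} [NontriviallyNormedField 𝕜]

theorem two_mul_mul_deriv_eq_of_sq_eq_comp {x w P : 𝕜 → 𝕜} {t dx dw dP : 𝕜}
    (hx : HasDerivAt x dx t) (hw : HasDerivAt w dw t) (hP : HasDerivAt P dP (x t))
    (hcurve : ∀ᶠ s in 𝓝 t, w s ^ 2 = P (x s)) :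
    2 * w t * dw = dP * dx := by
  have hsq : HasDerivAt (fun s => w s ^ 2) (2 * w t * dw) t := by
    simpa using hw.fun_pow 2
  have hcomp : HasDerivAt (fun s => w s ^ 2) (dP * dx) t :=
    (hP.comp t hx).congr_of_eventuallyEq hcurve
  exact hsq.unique hcomp

theorem hasDerivAt_jacobi_quartic (k y : 𝕜) :
    HasDerivAt (fun y => (1 - y ^ 2) * (1 - k ^ 2 * y ^ 2))
      (-2 * y * (1 + k ^ 2 - 2 * k ^ 2 * y ^ 2)) y := by
  refine (((hasDerivAt_pow 2 y).const_sub 1).fun_mul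
    (((hasDerivAt_pow 2 y).const_mul (k ^ 2)).const_sub 1)).congr_deriv ?_
  push_cast
  ring

variable [CharZero 𝕜]

theorem mul_deriv_eq_of_jacobi_curve {k : 𝕜} {x w : 𝕜 → 𝕜} {t dx dw : 𝕜}
    (hx : HasDerivAt x dx t) (hw : HasDerivAt w dw t)
    (hcurve : ∀ᶠ s in 𝓝 t, w s ^ 2 = (1 - x s ^ 2) * (1 - k ^ 2 * x s ^ 2)) :
    w t * dw = -x t * dx * (1 + k ^ 2 - 2 * k ^ 2 * x t ^ 2) := by
  have h := two_mul_mul_deriv_eq_of_sq_eq_comp hx hw (hasDerivAt_jacobi_quartic k (x t))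
    hcurve
  linear_combination h / 2

theorem hasDerivAt_const_mul_div_of_jacobi_curve (c : 𝕜) {k : 𝕜} {x w : 𝕜 → 𝕜} {t dx dw : 𝕜}
    (hx : HasDerivAt x dx t) (hw : HasDerivAt w dw t)
    (hcurve : ∀ᶠ s in 𝓝 t, w s ^ 2 = (1 - x s ^ 2) * (1 - k ^ 2 * x s ^ 2)) (hwt : w t ≠ 0) :
    HasDerivAt (fun s => c * x s / w s)
      ((k ^ 2 * x t ^ 4 - 1) / w t ^ 2 * (-c * dx / w t)) t := by
  have hquot := (hx.const_mul c).fun_div hw hwt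
  have hwdw := mul_deriv_eq_of_jacobi_curve hx hw hcurve
  refine hquot.congr_deriv ?_
  field_simp
  linear_combination c * dx * hcurve.self_of_nhds - c * x t * hwdw

end CurveDerivative

open Complex in
theorem pullback_of_differential_general (k : ℂ)
    (x w dx dw : ℂ → ℂ)
    (hx : ∀ t : ℂ, HasDerivAt x (dx t) t)
    (hw : ∀ t : ℂ, HasDerivAt w (dw t) t)
    (hcurve : ∀ t : ℂ, (w t) ^ 2 = (1 - (x t) ^ 2) * (1 - k ^ 2 * (x t) ^ 2))
    (hwne : ∀ t : ℂ, w t ≠ 0) :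
    ∀ t : ℂ,
      HasDerivAt (fun s => I * (1 + k) * x s / w s)
        ((k ^ 2 * (x t) ^ 4 - 1) / (w t) ^ 2 * (-(I * (1 + k)) * dx t / w t)) t :=
  fun t => hasDerivAt_const_mul_div_of_jacobi_curve _ (hx t) (hw t)
    (Eventually.of_forall hcurve) (hwne t)

open Complex in
/-- Pullback of the differential dλ/μ under φ(x,w) = (i(1+k)x/w, (k²x⁴-1)/w²)
    equals -i(1+k) dx/w: along a differentiable path on the curve
    w² = (1-x²)(1-k²x²), the derivative of λ(x(t),w(t)) equals
    μ(x(t),w(t)) · (-i(1+k) x'(t)/w(t)). -/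
theorem pullback_of_differential (k : ℂ) (hk : k ≠ -1)
    (x w dx dw : ℂ → ℂ)
    (hx : ∀ t : ℂ, HasDerivAt x (dx t) t)
    (hw : ∀ t : ℂ, HasDerivAt w (dw t) t)
    (hcurve : ∀ t : ℂ, (w t) ^ 2 = (1 - (x t) ^ 2) * (1 - k ^ 2 * (x t) ^ 2))
    (hwne : ∀ t : ℂ, w t ≠ 0)
    (hmune : ∀ t : ℂ, (k ^ 2 * (x t) ^ 4 - 1) / (w t) ^ 2 ≠ 0) :
    ∀ t : ℂ,
      HasDerivAt (fun s => I * (1 + k) * x s / w s)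
        ((k ^ 2 * (x t) ^ 4 - 1) / (w t) ^ 2 * (-(I * (1 + k)) * dx t / w t)) t :=
  pullback_of_differential_general k x w dx dw hx hw hcurve hwne
end

section
/- Let 𝕂, 𝕂' denote complete elliptic integrals with modulus k and 𝕂₁, 𝕂₁' those with modulus k₁ = (1-k)/(1+k), for 0 < k < 1. Then 𝕂 = 𝕂₁'/(i(1+k)) interpreted as follows: ∫₀¹ dx/√((1-x²)(1-k²x²)) = (1/(1+k))·∫₁^{1/k₁} dλ/√((λ²-1)(1-k₁²λ²)) — i.e., the real complete integral of modulus k equals 1/(1+k) times the complementary complete integral of modulus k₁. -/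
/-!
Landen's substitution `λ = (1 + k x²) / (1 - k x²)` maps `(0, 1)` increasingly onto
`(1, 1/k₁)`, and it factors the quartics:
`(λ² - 1)(1 - k₁² λ²) = (4 k x / ((1 + k)(1 - k x²)²))² (1 - x²)(1 - k² x²)`.
Since `dλ/dx = 4 k x / (1 - k x²)²`, the substituted integrand is exactly `1 + k` times the
integrand of `𝕂(k)`. For a monotone substitution the change of variables needs no
integrability, so the singular endpoints of these improper integrals cause no trouble.
-/

open Set

section Landen

noncomputable def landenMap (k x : ℝ) : ℝ := (1 + k * x ^ 2) / (1 - k * x ^ 2)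

variable {k x : ℝ}

theorem landenMap_zero (k : ℝ) : landenMap k 0 = 1 := by
  simp [landenMap]

theorem landenMap_one (k : ℝ) : landenMap k 1 = 1 / ((1 - k) / (1 + k)) := by
  simp [landenMap]

theorem hasDerivAt_landenMap (hkx : k * x ^ 2 ≠ 1) :
    HasDerivAt (landenMap k) (4 * k * x / (1 - k * x ^ 2) ^ 2) x := by
  have hden : 1 - k * x ^ 2 ≠ 0 := sub_ne_zero.2 hkx.symm
  have hnum : HasDerivAt (fun y ↦ 1 + k * y ^ 2) (2 * k * x) x := by
    simpa [mul_comm, mul_left_comm] using ((hasDerivAt_pow 2 x).const_mul k).const_add 1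
  have hden' : HasDerivAt (fun y ↦ 1 - k * y ^ 2) (-(2 * k * x)) x := by
    simpa [mul_comm, mul_left_comm] using ((hasDerivAt_pow 2 x).const_mul k).const_sub 1
  refine (hnum.div hden' hden).congr_deriv ?_
  field_simp
  ring

theorem mul_sq_lt_one_of_mem_Icc (hk : k < 1) (hx : x ∈ Icc 0 1) : k * x ^ 2 < 1 := by
  have hx2 : x ^ 2 ≤ 1 := pow_le_one₀ hx.1 hx.2
  rcases le_or_gt k 0 with hk0 | hk0 <;> nlinarith [sq_nonneg x]

theorem continuousOn_landenMap (hk : k < 1) : ContinuousOn (landenMap k) (Icc 0 1) :=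
  ContinuousOn.div (by fun_prop) (by fun_prop) fun _ hy ↦
    (sub_pos.2 (mul_sq_lt_one_of_mem_Icc hk hy)).ne'

theorem intervalIntegral_landenMap_subst (hk0 : 0 ≤ k) (hk1 : k < 1) (g : ℝ → ℝ) :
    ∫ x in (0:ℝ)..1, 4 * k * x / (1 - k * x ^ 2) ^ 2 * g (landenMap k x) =
      ∫ lam in (1:ℝ)..(1 / ((1 - k) / (1 + k))), g lam := by
  have hI : Ioo (min 0 1) (max 0 1) = Ioo (0:ℝ) 1 := by norm_num
  have h := intervalIntegral.integral_deriv_smul_comp_of_deriv_nonneg (a := 0) (b := 1) (g := g)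
    (by rw [uIcc_of_le zero_le_one]; exact continuousOn_landenMap hk1)
    (hI ▸ fun x hx ↦
      hasDerivAt_landenMap (mul_sq_lt_one_of_mem_Icc hk1 (Ioo_subset_Icc_self hx)).ne)
    (hI ▸ fun x hx ↦ by have := hx.1; positivity)
  rwa [landenMap_zero, landenMap_one] at h

theorem landenMap_quartic_eq (hk : 1 + k ≠ 0) (hkx : k * x ^ 2 ≠ 1) :
    (landenMap k x ^ 2 - 1) * (1 - ((1 - k) / (1 + k)) ^ 2 * landenMap k x ^ 2) =
      (4 * k * x / ((1 + k) * (1 - k * x ^ 2) ^ 2)) ^ 2 * ((1 - x ^ 2) * (1 - k ^ 2 * x ^ 2)) := by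
  have hden : 1 - k * x ^ 2 ≠ 0 := sub_ne_zero.2 hkx.symm
  unfold landenMap
  field_simp
  ring

theorem landen_integrand_eq (hk : 0 < k) (hx : 0 < x) (hkx : k * x ^ 2 ≠ 1) :
    4 * k * x / (1 - k * x ^ 2) ^ 2 *
        (1 / Real.sqrt ((landenMap k x ^ 2 - 1) *
          (1 - ((1 - k) / (1 + k)) ^ 2 * landenMap k x ^ 2))) =
      (1 + k) * (1 / Real.sqrt ((1 - x ^ 2) * (1 - k ^ 2 * x ^ 2))) := by
  have hden : 1 - k * x ^ 2 ≠ 0 := sub_ne_zero.2 hkx.symm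
  have hscale : 0 < 4 * k * x / ((1 + k) * (1 - k * x ^ 2) ^ 2) := by positivity
  rw [landenMap_quartic_eq (by positivity) hkx, Real.sqrt_mul (sq_nonneg _),
    Real.sqrt_sq hscale.le, ← one_div_mul_one_div, ← mul_assoc]
  congr 1
  field_simp

end Landen

/-- Landen-type transformation of complete elliptic integrals: for 0 < k < 1
    and k₁ = (1-k)/(1+k),
    ∫₀¹ dx/√((1-x²)(1-k²x²)) = (1/(1+k)) ∫₁^{1/k₁} dλ/√((λ²-1)(1-k₁²λ²)),
    i.e. 𝕂(k) = 𝕂'(k₁)/(1+k). -/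
theorem landen_transformation (k : ℝ) (hk0 : 0 < k) (hk1 : k < 1) :
    ∫ x in (0:ℝ)..1, 1 / Real.sqrt ((1 - x ^ 2) * (1 - k ^ 2 * x ^ 2)) =
      (1 / (1 + k)) *
        ∫ lam in (1:ℝ)..(1 / ((1 - k) / (1 + k))),
          1 / Real.sqrt ((lam ^ 2 - 1) *
            (1 - ((1 - k) / (1 + k)) ^ 2 * lam ^ 2)) := by
  rw [← intervalIntegral_landenMap_subst hk0.le hk1, intervalIntegral.integral_congr_Ioo_of_le
    zero_le_one fun x hx ↦ landen_integrand_eq hk0 hx.1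
      (mul_sq_lt_one_of_mem_Icc hk1 (Ioo_subset_Icc_self hx)).ne,
    intervalIntegral.integral_const_mul, ← mul_assoc, one_div_mul_cancel (by positivity), one_mul]
end

section
/- Suppose G̃₊ and G̃₋ are differentiable matrix-valued functions of t (with values in invertible n×n matrices of functions of λ) satisfying dG̃₊/dt = (L⁺ₜ + A₀)G̃₊ and dG̃₋/dt = G̃₋(L⁻ₜ - A₀), with G̃₊|₀ = G̃₋|₀ = I, where Lₜ = L⁻ₜ + L⁺ₜ satisfies the Lax equation dLₜ/dt = [L⁺ₜ + A₀, Lₜ] and Lₜ = G̃₋⁻¹L₀G̃₋. Then G := G̃₋G̃₊ satisfies dG/dt = L₀G and G|₀ = I, hence G = exp(tL₀). -/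
/-!
The two factorization equations combine by the product rule: the `A₀` terms cancel and what
remains is `G̃₋ (L⁻ + L⁺) G̃₊ = G̃₋ L G̃₊ = L₀ G̃₋ G̃₊`, so `G = G̃₋ G̃₊` solves the linear equation
`G' = L₀ G`. Uniqueness for this equation follows since `exp (-t L₀) G(t)` has zero derivative.
-/

open NormedSpace

section Factorization

variable {𝕜 A : Type*} [NontriviallyNormedField 𝕜] [NormedRing A] [NormedAlgebra 𝕜 A]

theorem hasDerivAt_mul_of_factorization {Gm Gp : 𝕜 → A} {Lminus Lplus B L₀ : A} {t : 𝕜}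
    (hGm : HasDerivAt Gm (Gm t * (Lminus - B)) t) (hGp : HasDerivAt Gp ((Lplus + B) * Gp t) t)
    (hconj : Gm t * (Lminus + Lplus) = L₀ * Gm t) :
    HasDerivAt (fun s => Gm s * Gp s) (L₀ * (Gm t * Gp t)) t := by
  refine (hGm.mul hGp).congr_deriv ?_
  rw [← mul_assoc L₀, ← hconj]
  noncomm_ring

end Factorization

section LinearEquation

variable {𝕂 A : Type*} [RCLike 𝕂] [NormedRing A] [NormedAlgebra 𝕂 A] [CompleteSpace A]

theorem exp_smul_mul_exp_smul_neg (t : 𝕂) (x : A) : exp (t • x) * exp (t • -x) = 1 := by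
  let +nondep : NormedAlgebra ℚ A := .restrictScalars ℚ 𝕂 A
  rw [← exp_add_of_commute (((Commute.refl x).neg_right.smul_right t).smul_left t),
    smul_neg, add_neg_cancel, exp_zero]

theorem hasDerivAt_exp_smul_neg_mul {G : 𝕂 → A} {x : A} {t : 𝕂}
    (hG : HasDerivAt G (x * G t) t) : HasDerivAt (fun s => exp (s • -x) * G s) 0 t := by
  refine ((hasDerivAt_exp_smul_const (-x) t).mul hG).congr_deriv ?_
  rw [mul_neg, neg_mul, mul_assoc, neg_add_cancel]

theorem eq_exp_smul_mul_of_hasDerivAt {G : 𝕂 → A} {x : A}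
    (hG : ∀ t, HasDerivAt G (x * G t) t) (t : 𝕂) : G t = exp (t • x) * G 0 := by
  have hconst : exp (t • -x) * G t = G 0 := by
    simpa using is_const_of_deriv_eq_zero
      (fun s => (hasDerivAt_exp_smul_neg_mul (hG s)).differentiableAt)
      (fun s => (hasDerivAt_exp_smul_neg_mul (hG s)).deriv) t 0
  rw [← hconst, ← mul_assoc, exp_smul_mul_exp_smul_neg, one_mul]

end LinearEquation

/-- If G̃₊ and G̃₋ satisfy dG̃₊/dt = (Lₜ⁺ + A₀)G̃₊, dG̃₋/dt = G̃₋(Lₜ⁻ - A₀),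
    with G̃₊(0) = G̃₋(0) = 1, Lₜ = Lₜ⁻ + Lₜ⁺ and G̃₋ Lₜ = L₀ G̃₋, then
    G = G̃₋G̃₊ satisfies dG/dt = L₀ G, G(0) = 1, hence G = exp(tL₀). -/
theorem G_equals_exp {A : Type*} [NormedRing A] [NormedAlgebra ℂ A]
    [CompleteSpace A]
    (L Lplus Lminus A₀ Gp Gm : ℂ → A) (L₀ : A)
    (hsplit : ∀ t : ℂ, L t = Lminus t + Lplus t)
    (hGp : ∀ t : ℂ, HasDerivAt Gp ((Lplus t + A₀ t) * Gp t) t)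
    (hGm : ∀ t : ℂ, HasDerivAt Gm (Gm t * (Lminus t - A₀ t)) t)
    (hconj : ∀ t : ℂ, Gm t * L t = L₀ * Gm t)
    (hGp0 : Gp 0 = 1) (hGm0 : Gm 0 = 1) :
    (∀ t : ℂ, HasDerivAt (fun s => Gm s * Gp s) (L₀ * (Gm t * Gp t)) t) ∧
    Gm 0 * Gp 0 = 1 ∧
    (∀ t : ℂ, Gm t * Gp t = NormedSpace.exp (t • L₀)) := by
  have hG : ∀ t, HasDerivAt (fun s => Gm s * Gp s) (L₀ * (Gm t * Gp t)) t := fun t =>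
    hasDerivAt_mul_of_factorization (hGm t) (hGp t) (hsplit t ▸ hconj t)
  have hG0 : Gm 0 * Gp 0 = 1 := by rw [hGm0, hGp0, one_mul]
  refine ⟨hG, hG0, fun t => ?_⟩
  rw [eq_exp_smul_mul_of_hasDerivAt hG t, hG0, mul_one]
end
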